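/- Let n be such that an n×n Hadamard matrix H exists, with Hᵀ = [𝟙 | Lᵀ]. Then i ↦ (2n)^{−1/2} L e_i is a unit-distance representation of K_n in ℝ^{n−1}, and for any diagonal A ⪰ 0 of size n−1 and any p ∈ [1,∞], this Hadamard representation is an optimal solution of 𝓔_p(K_n;A); in particular its objective value is (tr(A)/(2n))·‖𝟙‖_p. -/

import Mathlib

open scoped RealInnerProductSpace

def IsUnitDistRep {V : Type*} (G : SimpleGraph V) {d : ℕ}
    (u : V → EuclideanSpace ℝ (Fin d)) : Prop :=
  ∀ i j, G.Adj i j → ‖u i - u j‖ = 1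

def IsHypersphereRep {V : Type*} (G : SimpleGraph V) {d : ℕ}
    (u : V → EuclideanSpace ℝ (Fin d)) (t : ℝ) : Prop :=
  IsUnitDistRep G u ∧ ∀ i, ‖u i‖ ^ 2 = t

noncomputable def hypersphereNumber {V : Type*} (G : SimpleGraph V) : ℝ :=
  sInf {t | ∃ (d : ℕ) (u : V → EuclideanSpace ℝ (Fin d)), IsHypersphereRep G u t}

open Matrix

open scoped ENNReal

/-- The objective `‖(uᵢᵀ A uᵢ)_{i∈V}‖_p`. -/
noncomputable def objP {V : Type*} [Fintype V] (p : ℝ≥0∞) [Fact (1 ≤ p)] {d : ℕ}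
    (A : Matrix (Fin d) (Fin d) ℝ) (u : V → EuclideanSpace ℝ (Fin d)) : ℝ :=
  ‖(WithLp.equiv p (∀ _ : V, ℝ)).symm
    (fun i => dotProduct (WithLp.equiv 2 (Fin d → ℝ) (u i))
      (A *ᵥ WithLp.equiv 2 (Fin d → ℝ) (u i)))‖

/-- The Hadamard representation `i ↦ (2n)^{−1/2} L eᵢ` of `Kₙ`, where `Hᵀ = [𝟙 | Lᵀ]`,
i.e. `L` consists of the rows of `H` other than the all-ones first row. -/
noncomputable def hadamardRep (m : ℕ) (H : Matrix (Fin (m + 1)) (Fin (m + 1)) ℝ) :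
    Fin (m + 1) → EuclideanSpace ℝ (Fin m) :=
  fun i => (WithLp.equiv 2 (Fin m → ℝ)).symm
    (fun k => (Real.sqrt (2 * (m + 1)))⁻¹ * H k.succ i)

/-! For diagonal `A ⪰ 0` one has `∑ᵢ uᵢᵀ A uᵢ = ∑ₖ Aₖₖ ∑ᵢ uᵢₖ²`. The centred vertices of a unit
regular simplex with `m + 1` vertices in `ℝᵐ` have Gram matrix `½ (I - J / (m + 1))`, and a
trace count then forces them to be a tight frame, `W Wᵀ = ½ I`; so each coordinate has second
moment at least `½` and `∑ᵢ uᵢᵀ A uᵢ ≥ tr A / 2` for every unit-distance representation.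
Averaging a vector over its cyclic shifts shows `(mean q) ‖𝟙‖_p ≤ ‖q‖_p`, which turns this into
the lower bound `tr A / (2n) ‖𝟙‖_p`. The Hadamard representation attains it, because its entries
are `±(2n)^{-1/2}` and hence every `uᵢᵀ A uᵢ` equals `tr A / (2n)`. -/

open Finset

theorem abs_sum_mul_norm_toLp_one_le {ι : Type*} [Fintype ι] [AddGroup ι]
    (p : ℝ≥0∞) [Fact (1 ≤ p)] (q : ι → ℝ) :
    |∑ i, q i| * ‖WithLp.toLp p (1 : ι → ℝ)‖ ≤ Fintype.card ι * ‖WithLp.toLp p q‖ := by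
  have hshift : ∀ s : ι, ‖WithLp.toLp p (fun i => q (i + s))‖ = ‖WithLp.toLp p q‖ := fun s =>
    (LinearIsometryEquiv.piLpCongrLeft p ℝ ℝ (Equiv.addRight s).symm).norm_map (WithLp.toLp p q)
  have hsum : ∑ s, (fun i => q (i + s)) = (∑ i, q i) • (1 : ι → ℝ) := by
    ext i
    simpa using Equiv.sum_comp (Equiv.addLeft i) q
  calc |∑ i, q i| * ‖WithLp.toLp p (1 : ι → ℝ)‖
      = ‖∑ s, WithLp.toLp p (fun i => q (i + s))‖ := by
        rw [← WithLp.toLp_sum, hsum, WithLp.toLp_smul, norm_smul, Real.norm_eq_abs]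
    _ ≤ ∑ s, ‖WithLp.toLp p (fun i => q (i + s))‖ := norm_sum_le _ _
    _ = Fintype.card ι * ‖WithLp.toLp p q‖ := by simp [hshift]

theorem sum_sub_mean_sq_le_sum_sq {ι : Type*} [Fintype ι] (x : ι → ℝ) :
    ∑ i, (x i - (∑ j, x j) / Fintype.card ι) ^ 2 ≤ ∑ i, x i ^ 2 := by
  set n : ℝ := (Fintype.card ι : ℝ)
  set c := (∑ j, x j) / n
  have hexpand : ∑ i, (x i - c) ^ 2 = ∑ i, x i ^ 2 - c * (2 * ∑ j, x j - n * c) := by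
    simp only [sub_sq, sum_add_distrib, sum_sub_distrib, ← sum_mul, ← mul_sum, sum_const,
      card_univ, nsmul_eq_mul, n]
    ring
  rcases eq_or_ne n 0 with hn | hn
  · simp [c, hn]
  have hnc : n * c = ∑ j, x j := mul_div_cancel₀ _ hn
  have hn_nonneg : 0 ≤ n := Nat.cast_nonneg _
  rw [hexpand, ← hnc]
  nlinarith [mul_nonneg hn_nonneg (sq_nonneg c)]

theorem Matrix.dotProduct_mulVec_eq_sum_diag {n R : Type*} [Fintype n] [DecidableEq n]
    [CommSemiring R] {A : Matrix n n R} (hdiag : ∀ i j, i ≠ j → A i j = 0) (x : n → R) :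
    x ⬝ᵥ (A *ᵥ x) = ∑ k, A k k * x k ^ 2 := by
  have hA : A = diagonal A.diag := by
    ext i j
    rcases eq_or_ne i j with rfl | hij
    · simp
    · simp [hij, hdiag i j hij]
  conv_lhs => rw [hA]
  simp only [dotProduct, mulVec_diagonal, diag_apply]
  exact sum_congr rfl fun k _ => by ring

theorem objP_eq_of_diag {V : Type*} [Fintype V] (p : ℝ≥0∞) [Fact (1 ≤ p)] {d : ℕ}
    {A : Matrix (Fin d) (Fin d) ℝ} (hdiag : ∀ i j, i ≠ j → A i j = 0)
    (u : V → EuclideanSpace ℝ (Fin d)) :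
    objP p A u = ‖WithLp.toLp p (fun i => ∑ k, A k k * u i k ^ 2)‖ := by
  simp only [objP, WithLp.equiv_symm_apply, WithLp.equiv_apply,
    dotProduct_mulVec_eq_sum_diag hdiag]

section RegularSimplex

variable {ι : Type*} [Fintype ι] [DecidableEq ι]

theorem Matrix.eq_of_mulVec_one_eq_zero_of_sqDist_eq_one (B : Matrix ι ι ℝ)
    (hB : B *ᵥ 1 = 0) (hdist : ∀ i j, i ≠ j → B i i + B j j - 2 * B i j = 1) :
    B = (1 / 2 : ℝ) • (1 - (Fintype.card ι : ℝ)⁻¹ • vecMulVec 1 1) := by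
  rcases isEmpty_or_nonempty ι with hι | hι
  · exact Subsingleton.elim _ _
  set n : ℝ := (Fintype.card ι : ℝ) with hn
  have hn0 : n ≠ 0 := by simp [n, Fintype.card_ne_zero]
  have hrow : ∀ i, ∑ j, B i j = 0 := fun i => by simpa [mulVec, dotProduct] using congrFun hB i
  -- summing the distance identity over `j` ties each diagonal entry to the trace
  have hdiag_trace : ∀ i, n * B i i + B.trace = n - 1 := by
    intro i
    have hsum : ∑ j, (B i i + B j j - 2 * B i j) = n - 1 := by
      rw [← sum_erase (f := fun j => B i i + B j j - 2 * B i j) univ (a := i) (by ring),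
        sum_congr rfl fun j hj => hdist i j (ne_of_mem_erase hj).symm]
      simp [card_erase_of_mem, n, Nat.cast_sub Fintype.card_pos]
    rw [← hsum, sum_sub_distrib, sum_add_distrib, ← mul_sum, hrow]
    simp [Matrix.trace, n]
  have htrace : B.trace = (n - 1) / 2 := by
    have := sum_congr rfl fun i (_ : i ∈ univ) => hdiag_trace i
    simp only [sum_add_distrib, ← mul_sum, sum_const, card_univ, nsmul_eq_mul, ← hn] at this
    change n * B.trace + n * B.trace = n * (n - 1) at this
    apply mul_left_cancel₀ hn0
    linear_combination this / 2
  have hdiag : ∀ i, B i i = (n - 1) / (2 * n) := fun i => by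
    rw [eq_div_iff (by positivity)]
    linear_combination 2 * hdiag_trace i - 2 * htrace
  ext i j
  rcases eq_or_ne i j with rfl | hij
  · simp [hdiag]
    field_simp
  · have := hdist i j hij
    simp [hij]
    rw [hdiag, hdiag] at this
    field_simp at this ⊢
    linarith

theorem Matrix.mul_transpose_self_eq_half_of_sqDist_eq_one {d : ℕ} (W : Matrix (Fin d) ι ℝ)
    (hcard : Fintype.card ι = d + 1) (hW : W *ᵥ 1 = 0)
    (hdist : ∀ i j, i ≠ j → (Wᵀ * W) i i + (Wᵀ * W) j j - 2 * (Wᵀ * W) i j = 1) :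
    W * Wᵀ = (1 / 2 : ℝ) • 1 := by
  have hgram := (Wᵀ * W).eq_of_mulVec_one_eq_zero_of_sqDist_eq_one
    (by rw [← mulVec_mulVec, hW, mulVec_zero]) hdist
  have hWJ : W * vecMulVec (1 : ι → ℝ) (1 : ι → ℝ) = 0 := by rw [mul_vecMulVec, hW, zero_vecMulVec]
  -- `Q` is a symmetric idempotent of trace `0`, hence `0`
  set Q : Matrix (Fin d) (Fin d) ℝ := 1 - (2 : ℝ) • (W * Wᵀ)
  have hQ_symm : Qᵀ = Q := by simp [Q, transpose_mul]
  have hQ_idem : Q * Q = Q := by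
    have : W * Wᵀ * (W * Wᵀ) = (1 / 2 : ℝ) • (W * Wᵀ) := by
      rw [Matrix.mul_assoc, ← Matrix.mul_assoc Wᵀ, hgram]
      simp only [Matrix.smul_mul, Matrix.mul_smul, Matrix.sub_mul, Matrix.mul_sub, Matrix.one_mul,
        ← Matrix.mul_assoc, hWJ, Matrix.zero_mul, smul_zero, sub_zero]
    simp only [Q, Matrix.sub_mul, Matrix.mul_sub, Matrix.one_mul, Matrix.mul_one,
      Matrix.smul_mul, Matrix.mul_smul, this]
    module
  have hQ_trace : Q.trace = 0 := by
    have : (W * Wᵀ).trace = d / 2 := by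
      rw [trace_mul_comm, hgram, trace_smul, trace_sub, trace_smul, trace_one, trace_vecMulVec,
        one_dotProduct_one, hcard, smul_eq_mul, smul_eq_mul, inv_mul_cancel₀ (by positivity)]
      push_cast
      ring
    simp only [Q, trace_sub, trace_one, trace_smul, this, Fintype.card_fin, smul_eq_mul]
    ring
  have hQ : Q = 0 := by
    rw [← trace_conjTranspose_mul_self_eq_zero_iff, conjTranspose_eq_transpose_of_trivial,
      hQ_symm, hQ_idem, hQ_trace]
  rw [← (sub_eq_zero.mp hQ).symm, smul_smul]
  norm_num

theorem IsUnitDistRep.one_div_two_le_sum_sq {d : ℕ} (hcard : Fintype.card ι = d + 1)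
    {u : ι → EuclideanSpace ℝ (Fin d)} (hu : IsUnitDistRep (⊤ : SimpleGraph ι) u) (k : Fin d) :
    1 / 2 ≤ ∑ i, u i k ^ 2 := by
  set W : Matrix (Fin d) ι ℝ := of fun k i => u i k - (∑ j, u j k) / Fintype.card ι
  have hW : W *ᵥ 1 = 0 := by
    ext k
    simp only [W, mulVec, dotProduct, of_apply, Pi.one_apply, mul_one, sum_sub_distrib,
      sum_const, card_univ, nsmul_eq_mul, Pi.zero_apply]
    rw [mul_div_cancel₀ _ (by rw [hcard]; positivity), sub_self]
  have hdist : ∀ i j, i ≠ j → (Wᵀ * W) i i + (Wᵀ * W) j j - 2 * (Wᵀ * W) i j = 1 := by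
    intro i j hij
    have hnorm : ‖u i - u j‖ ^ 2 = 1 := by rw [hu i j hij, one_pow]
    rw [EuclideanSpace.real_norm_sq_eq] at hnorm
    rw [← hnorm]
    simp only [mul_apply, transpose_apply, mul_sum, ← sum_add_distrib, ← sum_sub_distrib]
    exact sum_congr rfl fun k _ => by simp only [W, of_apply, PiLp.sub_apply]; ring
  have hframe := W.mul_transpose_self_eq_half_of_sqDist_eq_one hcard hW hdist
  calc (1 / 2 : ℝ) = (W * Wᵀ) k k := by simp [hframe]
    _ = ∑ i, (u i k - (∑ j, u j k) / Fintype.card ι) ^ 2 := by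
      simp only [mul_apply, transpose_apply, W, of_apply, sq]
    _ ≤ ∑ i, u i k ^ 2 := sum_sub_mean_sq_le_sum_sq fun i => u i k

theorem IsUnitDistRep.trace_div_two_le_sum {d : ℕ} (hcard : Fintype.card ι = d + 1)
    {u : ι → EuclideanSpace ℝ (Fin d)} (hu : IsUnitDistRep (⊤ : SimpleGraph ι) u)
    {A : Matrix (Fin d) (Fin d) ℝ} (hA : ∀ k, 0 ≤ A k k) :
    A.trace / 2 ≤ ∑ i, ∑ k, A k k * u i k ^ 2 := by
  rw [sum_comm, Matrix.trace, sum_div]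
  gcongr with k
  rw [← mul_sum, div_eq_mul_one_div]
  exact mul_le_mul_of_nonneg_left (hu.one_div_two_le_sum_sq hcard k) (hA k)

theorem IsUnitDistRep.trace_div_mul_norm_one_le_objP {d : ℕ} (p : ℝ≥0∞) [Fact (1 ≤ p)]
    {u : Fin (d + 1) → EuclideanSpace ℝ (Fin d)} (hu : IsUnitDistRep ⊤ u)
    {A : Matrix (Fin d) (Fin d) ℝ} (hA : ∀ k, 0 ≤ A k k) (hdiag : ∀ i j, i ≠ j → A i j = 0) :
    A.trace / (2 * (d + 1)) * ‖WithLp.toLp p (1 : Fin (d + 1) → ℝ)‖ ≤ objP p A u := by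
  rw [objP_eq_of_diag p hdiag]
  set q : Fin (d + 1) → ℝ := fun i => ∑ k, A k k * u i k ^ 2
  have hsum : A.trace / 2 ≤ |∑ i, q i| :=
    (hu.trace_div_two_le_sum (Fintype.card_fin _) hA).trans (le_abs_self _)
  have hmean := abs_sum_mul_norm_toLp_one_le p q
  rw [Fintype.card_fin, Nat.cast_add, Nat.cast_one] at hmean
  calc A.trace / (2 * (d + 1)) * ‖WithLp.toLp p (1 : Fin (d + 1) → ℝ)‖
      = A.trace / 2 * ‖WithLp.toLp p (1 : Fin (d + 1) → ℝ)‖ / (d + 1) := by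
        rw [← div_div]; ring
    _ ≤ |∑ i, q i| * ‖WithLp.toLp p (1 : Fin (d + 1) → ℝ)‖ / (d + 1) := by gcongr
    _ ≤ ‖WithLp.toLp p q‖ := by rw [div_le_iff₀ (by positivity)]; linarith

end RegularSimplex

theorem Matrix.sum_sub_sq_eq_of_transpose_mul_self_eq_smul_one {ι : Type*} [Fintype ι]
    [DecidableEq ι] {H : Matrix ι ι ℝ} {c : ℝ} (hH : Hᵀ * H = c • 1) {i j : ι} (hij : i ≠ j) :
    ∑ k, (H k i - H k j) ^ 2 = 2 * c := by
  have hgram : ∀ a b, ∑ k, H k a * H k b = (c • (1 : Matrix ι ι ℝ)) a b := fun a b => by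
    rw [← hH, mul_apply]
    rfl
  have hii := hgram i i
  have hjj := hgram j j
  have hij' := hgram i j
  simp only [smul_apply, one_apply_eq, one_apply_ne hij, smul_eq_mul, mul_one, mul_zero]
    at hii hjj hij'
  have hexpand : ∀ k, (H k i - H k j) ^ 2 = H k i * H k i + H k j * H k j - 2 * (H k i * H k j) :=
    fun k => by ring
  simp only [hexpand, sum_sub_distrib, sum_add_distrib, ← mul_sum, hii, hjj, hij']
  ring

section Hadamard

variable {m : ℕ} {H : Matrix (Fin (m + 1)) (Fin (m + 1)) ℝ}

theorem hadamardRep_apply (i : Fin (m + 1)) (k : Fin m) :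
    hadamardRep m H i k = (Real.sqrt (2 * (m + 1)))⁻¹ * H k.succ i := by
  simp [hadamardRep]

theorem sq_hadamardRep_apply (i : Fin (m + 1)) (k : Fin m) :
    hadamardRep m H i k ^ 2 = (2 * ((m : ℝ) + 1))⁻¹ * H k.succ i ^ 2 := by
  rw [hadamardRep_apply, mul_pow, inv_pow, Real.sq_sqrt (by positivity)]

theorem isUnitDistRep_hadamardRep
    (hHad : Hᵀ * H = ((m + 1 : ℕ) : ℝ) • (1 : Matrix (Fin (m + 1)) (Fin (m + 1)) ℝ))
    (hones : ∀ j, H 0 j = 1) :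
    IsUnitDistRep (⊤ : SimpleGraph (Fin (m + 1))) (hadamardRep m H) := by
  intro i j hij
  have hcols := sum_sub_sq_eq_of_transpose_mul_self_eq_smul_one hHad hij
  rw [Fin.sum_univ_succ, hones, hones, sub_self, sq, zero_mul, zero_add] at hcols
  rw [← pow_eq_one_iff_of_nonneg (norm_nonneg _) two_ne_zero, EuclideanSpace.real_norm_sq_eq]
  simp only [PiLp.sub_apply, hadamardRep_apply, ← mul_sub, mul_pow, inv_pow,
    Real.sq_sqrt (by positivity : (0 : ℝ) ≤ 2 * (m + 1)), ← mul_sum, hcols]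
  push_cast
  field_simp

theorem sum_diag_mul_sq_hadamardRep (hpm : ∀ i j, H i j = 1 ∨ H i j = -1)
    (A : Matrix (Fin m) (Fin m) ℝ) (i : Fin (m + 1)) :
    ∑ k, A k k * hadamardRep m H i k ^ 2 = A.trace / (2 * (m + 1)) := by
  have hsq : ∀ k : Fin m, H k.succ i ^ 2 = 1 := fun k => by
    rcases hpm k.succ i with h | h <;> simp [h]
  simp only [sq_hadamardRep_apply, hsq, mul_one, ← sum_mul, Matrix.trace, diag_apply,
    div_eq_mul_inv]

theorem objP_hadamardRep (hpm : ∀ i j, H i j = 1 ∨ H i j = -1) (p : ℝ≥0∞) [Fact (1 ≤ p)]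
    {A : Matrix (Fin m) (Fin m) ℝ} (hA : ∀ k, 0 ≤ A k k) (hdiag : ∀ i j, i ≠ j → A i j = 0) :
    objP p A (hadamardRep m H)
      = A.trace / (2 * (m + 1)) * ‖WithLp.toLp p (1 : Fin (m + 1) → ℝ)‖ := by
  set c := A.trace / (2 * (m + 1))
  have hc : 0 ≤ c := div_nonneg (sum_nonneg fun k _ => hA k) (by positivity)
  have hconst : (fun _ => c) = c • (1 : Fin (m + 1) → ℝ) := by ext; simp
  rw [objP_eq_of_diag p hdiag, funext (sum_diag_mul_sq_hadamardRep hpm A), hconst,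
    WithLp.toLp_smul, norm_smul, Real.norm_eq_abs, abs_of_nonneg hc]

end Hadamard

/-- For an `n × n` Hadamard matrix `H` (with all-ones first row), the Hadamard
representation is a unit-distance representation of `Kₙ` which is optimal for
`𝓔_p(Kₙ; A)` for every diagonal `A ⪰ 0` and every `p ∈ [1,∞]`, with objective value
`(tr A / (2n)) ‖𝟙‖_p`. -/
theorem hadamardRep_optimal (m : ℕ) (H : Matrix (Fin (m + 1)) (Fin (m + 1)) ℝ)
    (hpm : ∀ i j, H i j = 1 ∨ H i j = -1)
    (hHad : Hᵀ * H = ((m + 1 : ℕ) : ℝ) • (1 : Matrix (Fin (m + 1)) (Fin (m + 1)) ℝ))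
    (hones : ∀ j, H 0 j = 1)
    (p : ℝ≥0∞) [Fact (1 ≤ p)]
    (A : Matrix (Fin m) (Fin m) ℝ) (hA : A.PosSemidef)
    (hdiag : ∀ i j, i ≠ j → A i j = 0) :
    IsUnitDistRep (SimpleGraph.completeGraph (Fin (m + 1))) (hadamardRep m H) ∧
      objP p A (hadamardRep m H)
        = sInf {r : ℝ | ∃ u : Fin (m + 1) → EuclideanSpace ℝ (Fin m),
            IsUnitDistRep (SimpleGraph.completeGraph (Fin (m + 1))) u ∧ r = objP p A u} ∧
      objP p A (hadamardRep m H)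
        = A.trace / (2 * (m + 1)) *
            ‖(WithLp.equiv p (∀ _ : Fin (m + 1), ℝ)).symm (fun _ => (1 : ℝ))‖ := by
  have hA_diag : ∀ k, 0 ≤ A k k := fun k => hA.diag_nonneg
  have hrep := isUnitDistRep_hadamardRep hHad hones
  have hobj := objP_hadamardRep hpm p hA_diag hdiag
  refine ⟨hrep, (IsLeast.csInf_eq ?_).symm, hobj⟩
  refine ⟨⟨_, hrep, rfl⟩, ?_⟩
  rintro _ ⟨u, hu, rfl⟩
  exact hobj ▸ hu.trace_div_mul_norm_one_le_objP p hA_diag hdiag
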